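/- arXiv:2202.01805 — 3 statements merged into one kernel-verified Lean document; each statement's English description precedes it below -/
import Mathlib

section
/- The function V(x) = (1/(2(p−1)))‖x‖_p² with p ∈ (1, 2] is 1-strongly convex with respect to the ℓ_p-norm on ℝ^d; equivalently, ‖·‖_p² is (p−1)-strongly convex in ‖·‖_p for p ∈ (1, 2]. -/
/-!
Write `x = a + b` and `y = a - b`, so that `a` is the midpoint. Coordinatewise, the two-point
inequality of Ball, Carlen and Lieb gives
`(aᵢ² + (p - 1) bᵢ²) ^ (p / 2) ≤ (|aᵢ + bᵢ| ^ p + |aᵢ - bᵢ| ^ p) / 2`; by homogeneity it reduces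
to `(1 + (p - 1) t²) ^ (p / 2) ≤ ((1 + t) ^ p + (1 - t) ^ p) / 2` for `|t| ≤ 1`, where Bernoulli's
inequality bounds the left side by `1 + p (p - 1) t² / 2` and a monotonicity argument bounds the
right side from below by the same quantity. Summing over coordinates, Minkowski's inequality for
the concave exponent `p / 2` (which reverses) on the left and convexity of `s ↦ s ^ (2 / p)` on
the right yield `‖a‖² + (p - 1) ‖b‖² ≤ (‖x‖² + ‖y‖²) / 2` in `ℓ_p`, which is the claim after
dividing by `2 (p - 1)`.
-/

open Real Set Finset

lemma two_mul_mul_le_one_add_rpow_sub_one_sub_rpow {s t : ℝ} (hs0 : 0 < s) (hs1 : s ≤ 1)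
    (ht : t ∈ Icc (0 : ℝ) 1) : 2 * s * t ≤ (1 + t) ^ s - (1 - t) ^ s := by
  let f : ℝ → ℝ := fun t ↦ (1 + t) ^ s - (1 - t) ^ s - 2 * s * t
  have hf : MonotoneOn f (Icc 0 1) := by
    refine monotoneOn_of_hasDerivWithinAt_nonneg (convex_Icc 0 1)
      (f' := fun t ↦ s * (1 + t) ^ (s - 1) + s * (1 - t) ^ (s - 1) - 2 * s) ?_ ?_ ?_
    · have := Real.continuous_rpow_const hs0.le
      fun_prop
    · rw [interior_Icc]
      rintro t ⟨ht0, ht1⟩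
      have hplus := ((hasDerivAt_id t).const_add 1).rpow_const (p := s)
        (.inl (by linarith : (0 : ℝ) < 1 + t).ne')
      have hminus := ((hasDerivAt_id t).const_sub 1).rpow_const (p := s)
        (.inl (by linarith : (0 : ℝ) < 1 - t).ne')
      exact (((hplus.sub hminus).sub ((hasDerivAt_id t).const_mul (2 * s))).congr_deriv
        (by simp only [id]; ring)).hasDerivWithinAt
    · rw [interior_Icc]
      rintro t ⟨ht0, ht1⟩
      -- AM–GM: the two powers have product `(1 - t²) ^ (s - 1) ≥ 1`.
      have hprod : 1 ≤ (1 + t) ^ (s - 1) * (1 - t) ^ (s - 1) := by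
        rw [← mul_rpow (by linarith) (by linarith)]
        exact one_le_rpow_of_pos_of_le_one_of_nonpos (by nlinarith) (by nlinarith) (by linarith)
      have hplus : 0 < (1 + t) ^ (s - 1) := rpow_pos_of_pos (by linarith) _
      have hminus : 0 < (1 - t) ^ (s - 1) := rpow_pos_of_pos (by linarith) _
      nlinarith [sq_nonneg ((1 + t) ^ (s - 1) - (1 - t) ^ (s - 1))]
  simpa [f] using hf ⟨le_rfl, zero_le_one⟩ ht ht.1

lemma two_add_mul_sq_le_one_add_rpow_add_one_sub_rpow {p t : ℝ} (hp1 : 1 < p) (hp2 : p ≤ 2)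
    (ht : t ∈ Icc (0 : ℝ) 1) : 2 + p * (p - 1) * t ^ 2 ≤ (1 + t) ^ p + (1 - t) ^ p := by
  let g : ℝ → ℝ := fun t ↦ (1 + t) ^ p + (1 - t) ^ p - p * (p - 1) * t ^ 2
  have hg : MonotoneOn g (Icc 0 1) := by
    refine monotoneOn_of_hasDerivWithinAt_nonneg (convex_Icc 0 1)
      (f' := fun t ↦ p * ((1 + t) ^ (p - 1) - (1 - t) ^ (p - 1) - 2 * (p - 1) * t)) ?_ ?_ ?_
    · have := Real.continuous_rpow_const (by linarith : 0 ≤ p)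
      fun_prop
    · rw [interior_Icc]
      rintro t ⟨ht0, ht1⟩
      have hplus := ((hasDerivAt_id t).const_add 1).rpow_const (p := p)
        (.inl (by linarith : (0 : ℝ) < 1 + t).ne')
      have hminus := ((hasDerivAt_id t).const_sub 1).rpow_const (p := p)
        (.inl (by linarith : (0 : ℝ) < 1 - t).ne')
      exact (((hplus.add hminus).sub ((hasDerivAt_pow 2 t).const_mul (p * (p - 1)))).congr_deriv
        (by simp only [id]; ring)).hasDerivWithinAt
    · rw [interior_Icc]
      rintro t ⟨ht0, ht1⟩
      have := two_mul_mul_le_one_add_rpow_sub_one_sub_rpow (by linarith) (by linarith : p - 1 ≤ 1)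
        ⟨ht0.le, ht1.le⟩
      exact mul_nonneg (by linarith) (by linarith)
  have := hg ⟨le_rfl, zero_le_one⟩ ht ht.1
  norm_num [g] at this
  linarith

lemma one_add_mul_sq_rpow_le {p t : ℝ} (hp1 : 1 < p) (hp2 : p ≤ 2) (ht : |t| ≤ 1) :
    (1 + (p - 1) * t ^ 2) ^ (p / 2) ≤ ((1 + t) ^ p + (1 - t) ^ p) / 2 := by
  have hbernoulli : (1 + (p - 1) * t ^ 2) ^ (p / 2) ≤ 1 + p / 2 * ((p - 1) * t ^ 2) :=
    rpow_one_add_le_one_add_mul_self (by nlinarith) (by positivity) (by linarith)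
  have key : 2 + p * (p - 1) * t ^ 2 ≤ (1 + t) ^ p + (1 - t) ^ p := by
    rcases le_total 0 t with h | h
    · exact two_add_mul_sq_le_one_add_rpow_add_one_sub_rpow hp1 hp2 ⟨h, (le_abs_self t).trans ht⟩
    · have := two_add_mul_sq_le_one_add_rpow_add_one_sub_rpow hp1 hp2
        ⟨neg_nonneg.2 h, (neg_le_abs t).trans ht⟩
      rw [neg_sq, ← sub_eq_add_neg, sub_neg_eq_add] at this
      linarith
  linarith

lemma rpow_sq_add_mul_sq_le_of_abs_le {p a b : ℝ} (hp1 : 1 < p) (hp2 : p ≤ 2) (hba : |b| ≤ |a|) :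
    (a ^ 2 + (p - 1) * b ^ 2) ^ (p / 2) ≤ (|a + b| ^ p + |a - b| ^ p) / 2 := by
  rcases eq_or_ne a 0 with rfl | ha
  · obtain rfl : b = 0 := abs_nonpos_iff.1 (by simpa using hba)
    simp [zero_rpow (by positivity : p / 2 ≠ 0), zero_rpow (by positivity : p ≠ 0)]
  set t := b / a
  have hb : b = a * t := (mul_div_cancel₀ b ha).symm
  have ht : |t| ≤ 1 := by rw [abs_div]; exact div_le_one_of_le₀ hba (abs_nonneg a)
  obtain ⟨h1, h2⟩ : 0 ≤ 1 + t ∧ 0 ≤ 1 - t := by constructor <;> linarith [abs_le.1 ht]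
  calc (a ^ 2 + (p - 1) * b ^ 2) ^ (p / 2) = |a| ^ p * (1 + (p - 1) * t ^ 2) ^ (p / 2) := by
        rw [hb, show a ^ 2 + (p - 1) * (a * t) ^ 2 = a ^ 2 * (1 + (p - 1) * t ^ 2) by ring,
          mul_rpow (sq_nonneg a) (by nlinarith), rpow_div_two_eq_sqrt _ (sq_nonneg a),
          sqrt_sq_eq_abs]
    _ ≤ |a| ^ p * (((1 + t) ^ p + (1 - t) ^ p) / 2) := by
        gcongr; exact one_add_mul_sq_rpow_le hp1 hp2 ht
    _ = (|a + b| ^ p + |a - b| ^ p) / 2 := by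
        rw [hb, show a + a * t = a * (1 + t) by ring, show a - a * t = a * (1 - t) by ring,
          abs_mul, abs_mul, abs_of_nonneg h1, abs_of_nonneg h2, mul_rpow (abs_nonneg a) h1,
          mul_rpow (abs_nonneg a) h2]
        ring

lemma rpow_sq_add_mul_sq_le {p : ℝ} (hp1 : 1 < p) (hp2 : p ≤ 2) (a b : ℝ) :
    (a ^ 2 + (p - 1) * b ^ 2) ^ (p / 2) ≤ (|a + b| ^ p + |a - b| ^ p) / 2 := by
  rcases le_total |b| |a| with h | h
  · exact rpow_sq_add_mul_sq_le_of_abs_le hp1 hp2 h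
  · -- Since `p - 1 ≤ 1`, weighting the larger square by `p - 1` gives the smaller left side.
    have hab : a ^ 2 ≤ b ^ 2 := sq_le_sq.2 h
    calc (a ^ 2 + (p - 1) * b ^ 2) ^ (p / 2) ≤ (b ^ 2 + (p - 1) * a ^ 2) ^ (p / 2) :=
          rpow_le_rpow (by nlinarith) (by nlinarith) (by linarith)
      _ ≤ (|b + a| ^ p + |b - a| ^ p) / 2 := rpow_sq_add_mul_sq_le_of_abs_le hp1 hp2 h
      _ = (|a + b| ^ p + |a - b| ^ p) / 2 := by rw [add_comm b a, abs_sub_comm]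

lemma rpow_add_le_sum_rpow_add {ι : Type*} {s : Finset ι} {r : ℝ} (hr0 : 0 < r) (hr1 : r ≤ 1)
    {u v : ι → ℝ} (hu : ∀ i ∈ s, 0 ≤ u i) (hv : ∀ i ∈ s, 0 ≤ v i) {A B : ℝ} (hA : 0 < A)
    (hB : 0 < B) (hAu : ∑ i ∈ s, u i ^ r = A ^ r) (hBv : ∑ i ∈ s, v i ^ r = B ^ r) :
    (A + B) ^ r ≤ ∑ i ∈ s, (u i + v i) ^ r := by
  have hAB : 0 < A + B := add_pos hA hB
  have hu_normed : ∑ i ∈ s, (u i / A) ^ r = 1 := by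
    rw [sum_congr rfl fun i hi ↦ div_rpow (hu i hi) hA.le r, ← sum_div, hAu,
      div_self (rpow_pos_of_pos hA r).ne']
  have hv_normed : ∑ i ∈ s, (v i / B) ^ r = 1 := by
    rw [sum_congr rfl fun i hi ↦ div_rpow (hv i hi) hB.le r, ← sum_div, hBv,
      div_self (rpow_pos_of_pos hB r).ne']
  -- Concavity of `x ↦ x ^ r` at `u i + v i = (A + B) (λ (u i / A) + (1 - λ) (v i / B))`,
  -- where `λ = A / (A + B)`.
  have hpointwise : ∀ i ∈ s, (A + B) ^ r * (A / (A + B) * (u i / A) ^ r +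
      B / (A + B) * (v i / B) ^ r) ≤ (u i + v i) ^ r := by
    intro i hi
    have hconc := (concaveOn_rpow hr0.le hr1).2 (mem_Ici.2 (div_nonneg (hu i hi) hA.le))
      (mem_Ici.2 (div_nonneg (hv i hi) hB.le)) (by positivity : 0 ≤ A / (A + B))
      (by positivity : 0 ≤ B / (A + B)) (by field_simp)
    have hcomb : A / (A + B) * (u i / A) + B / (A + B) * (v i / B) = (u i + v i) / (A + B) := by
      field_simp
    simp only [smul_eq_mul, hcomb] at hconc
    rw [div_rpow (add_nonneg (hu i hi) (hv i hi)) hAB.le] at hconc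
    calc _ ≤ (A + B) ^ r * ((u i + v i) ^ r / (A + B) ^ r) := by gcongr
      _ = (u i + v i) ^ r := mul_div_cancel₀ _ (rpow_pos_of_pos hAB r).ne'
  refine le_of_eq_of_le ?_ (sum_le_sum hpointwise)
  rw [← mul_sum, sum_add_distrib, ← mul_sum, ← mul_sum, hu_normed, hv_normed]
  field_simp

lemma Lp_add_ge_of_le_one {ι : Type*} (s : Finset ι) {r : ℝ} (hr0 : 0 < r) (hr1 : r ≤ 1)
    {u v : ι → ℝ} (hu : ∀ i ∈ s, 0 ≤ u i) (hv : ∀ i ∈ s, 0 ≤ v i) :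
    (∑ i ∈ s, u i ^ r) ^ (1 / r) + (∑ i ∈ s, v i ^ r) ^ (1 / r) ≤
      (∑ i ∈ s, (u i + v i) ^ r) ^ (1 / r) := by
  have hSu : 0 ≤ ∑ i ∈ s, u i ^ r := sum_nonneg fun i hi ↦ rpow_nonneg (hu i hi) r
  have hSv : 0 ≤ ∑ i ∈ s, v i ^ r := sum_nonneg fun i hi ↦ rpow_nonneg (hv i hi) r
  have hu_le : (∑ i ∈ s, u i ^ r) ^ (1 / r) ≤ (∑ i ∈ s, (u i + v i) ^ r) ^ (1 / r) := by
    gcongr with i hi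
    · exact hu i hi
    · linarith [hv i hi]
  have hv_le : (∑ i ∈ s, v i ^ r) ^ (1 / r) ≤ (∑ i ∈ s, (u i + v i) ^ r) ^ (1 / r) := by
    gcongr with i hi
    · exact hv i hi
    · linarith [hu i hi]
  have hrpow_inv {S : ℝ} (hS : 0 ≤ S) : (S ^ (1 / r)) ^ r = S := by
    rw [← rpow_mul hS, one_div_mul_cancel hr0.ne', rpow_one]
  rcases (rpow_nonneg hSu (1 / r)).eq_or_lt with hA | hA
  · rw [← hA, zero_add]; exact hv_le
  rcases (rpow_nonneg hSv (1 / r)).eq_or_lt with hB | hB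
  · rw [← hB, add_zero]; exact hu_le
  calc _ = ((_ + _) ^ r) ^ (1 / r) := by
        rw [← rpow_mul (add_pos hA hB).le, mul_one_div_cancel hr0.ne', rpow_one]
    _ ≤ _ := by
        gcongr
        exact rpow_add_le_sum_rpow_add hr0 hr1 hu hv hA hB (hrpow_inv hSu).symm
          (hrpow_inv hSv).symm

lemma add_div_two_rpow_le {q x y : ℝ} (hq : 1 ≤ q) (hx : 0 ≤ x) (hy : 0 ≤ y) :
    ((x + y) / 2) ^ q ≤ (x ^ q + y ^ q) / 2 := by
  have := (convexOn_rpow hq).2 (mem_Ici.2 hx) (mem_Ici.2 hy) (by norm_num : (0 : ℝ) ≤ 1 / 2)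
    (by norm_num : (0 : ℝ) ≤ 1 / 2) (by norm_num)
  simp only [smul_eq_mul] at this
  calc ((x + y) / 2) ^ q = (1 / 2 * x + 1 / 2 * y) ^ q := by ring_nf
    _ ≤ 1 / 2 * x ^ q + 1 / 2 * y ^ q := this
    _ = (x ^ q + y ^ q) / 2 := by ring

noncomputable def pNorm {ι : Type*} [Fintype ι] (p : ℝ) (x : ι → ℝ) : ℝ :=
  (∑ i, |x i| ^ p) ^ (1 / p)

section pNorm

variable {ι : Type*} [Fintype ι] {p : ℝ}

lemma pNorm_sq (x : ι → ℝ) : pNorm p x ^ 2 = (∑ i, |x i| ^ p) ^ (2 / p) := by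
  rw [pNorm, ← rpow_natCast, ← rpow_mul (sum_nonneg fun i _ ↦ rpow_nonneg (abs_nonneg _) _)]
  congr 1
  ring

lemma pNorm_smul (hp : p ≠ 0) (c : ℝ) (x : ι → ℝ) : pNorm p (c • x) = |c| * pNorm p x := by
  simp only [pNorm, Pi.smul_apply, smul_eq_mul, abs_mul,
    mul_rpow (abs_nonneg c) (abs_nonneg _), ← mul_sum]
  rw [mul_rpow (rpow_nonneg (abs_nonneg c) _)
    (sum_nonneg fun i _ ↦ rpow_nonneg (abs_nonneg _) _), ← rpow_mul (abs_nonneg c),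
    mul_one_div_cancel hp, rpow_one]

theorem pNorm_sq_add_mul_pNorm_sq_le (hp1 : 1 < p) (hp2 : p ≤ 2) (a b : ι → ℝ) :
    pNorm p a ^ 2 + (p - 1) * pNorm p b ^ 2 ≤
      (pNorm p (a + b) ^ 2 + pNorm p (a - b) ^ 2) / 2 := by
  have hsq_rpow (c : ℝ) : (c ^ 2) ^ (p / 2) = |c| ^ p := by
    rw [rpow_div_two_eq_sqrt _ (sq_nonneg c), sqrt_sq_eq_abs]
  have hsum_nonneg (x : ι → ℝ) : 0 ≤ ∑ i, |x i| ^ p :=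
    sum_nonneg fun i _ ↦ rpow_nonneg (abs_nonneg _) _
  have ha : pNorm p a ^ 2 = (∑ i, (a i ^ 2) ^ (p / 2)) ^ (1 / (p / 2)) := by
    simp only [hsq_rpow, pNorm_sq, one_div_div]
  have hb : (p - 1) * pNorm p b ^ 2 = (∑ i, ((p - 1) * b i ^ 2) ^ (p / 2)) ^ (1 / (p / 2)) := by
    simp only [mul_rpow (sub_pos.2 hp1).le (sq_nonneg _), hsq_rpow, ← mul_sum]
    rw [mul_rpow (rpow_nonneg (sub_pos.2 hp1).le _) (hsum_nonneg b), ← rpow_mul (sub_pos.2 hp1).le,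
      one_div_div, show p / 2 * (2 / p) = 1 by field_simp, rpow_one, pNorm_sq]
  calc pNorm p a ^ 2 + (p - 1) * pNorm p b ^ 2
      = (∑ i, (a i ^ 2) ^ (p / 2)) ^ (1 / (p / 2)) +
          (∑ i, ((p - 1) * b i ^ 2) ^ (p / 2)) ^ (1 / (p / 2)) := by rw [ha, hb]
    _ ≤ (∑ i, (a i ^ 2 + (p - 1) * b i ^ 2) ^ (p / 2)) ^ (1 / (p / 2)) :=
        Lp_add_ge_of_le_one univ (by linarith) (by linarith) (fun i _ ↦ sq_nonneg _)
          (fun i _ ↦ mul_nonneg (sub_pos.2 hp1).le (sq_nonneg _))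
    _ ≤ (∑ i, (|a i + b i| ^ p + |a i - b i| ^ p) / 2) ^ (2 / p) := by
        rw [one_div_div]
        gcongr with i
        exact rpow_sq_add_mul_sq_le hp1 hp2 (a i) (b i)
    _ = ((∑ i, |(a + b) i| ^ p + ∑ i, |(a - b) i| ^ p) / 2) ^ (2 / p) := by
        rw [← sum_div, sum_add_distrib]
        rfl
    _ ≤ (pNorm p (a + b) ^ 2 + pNorm p (a - b) ^ 2) / 2 := by
        rw [pNorm_sq, pNorm_sq]
        exact add_div_two_rpow_le ((one_le_div₀ (by linarith)).2 hp2) (hsum_nonneg _)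
          (hsum_nonneg _)

end pNorm

/-- For `p ∈ (1, 2]`, the function `V(x) = ‖x‖_p² / (2(p-1))` is `1`-strongly convex
with respect to the `ℓ_p`-norm on `ℝ^d` (midpoint sense); equivalently `‖·‖_p²` is
`(p-1)`-strongly convex in `‖·‖_p`. -/
theorem lp_norm_squared_strongly_convex
    {d : ℕ} (p : ℝ) (hp1 : 1 < p) (hp2 : p ≤ 2) :
    ∀ x y : Fin d → ℝ,
      (fun z : Fin d → ℝ => 1 / (2 * (p - 1)) * ((∑ i, |z i| ^ p) ^ (1 / p)) ^ 2)
          ((1 / 2 : ℝ) • (x + y)) ≤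
        ((fun z : Fin d → ℝ => 1 / (2 * (p - 1)) * ((∑ i, |z i| ^ p) ^ (1 / p)) ^ 2) x +
          (fun z : Fin d → ℝ => 1 / (2 * (p - 1)) * ((∑ i, |z i| ^ p) ^ (1 / p)) ^ 2) y) / 2 -
        1 / 8 * ((∑ i, |x i - y i| ^ p) ^ (1 / p)) ^ 2 := by
  intro x y
  change 1 / (2 * (p - 1)) * pNorm p ((1 / 2 : ℝ) • (x + y)) ^ 2 ≤
    (1 / (2 * (p - 1)) * pNorm p x ^ 2 + 1 / (2 * (p - 1)) * pNorm p y ^ 2) / 2 -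
      1 / 8 * pNorm p (x - y) ^ 2
  have key := pNorm_sq_add_mul_pNorm_sq_le hp1 hp2 ((1 / 2 : ℝ) • (x + y)) ((1 / 2 : ℝ) • (x - y))
  rw [show (1 / 2 : ℝ) • (x + y) + (1 / 2 : ℝ) • (x - y) = x by module,
    show (1 / 2 : ℝ) • (x + y) - (1 / 2 : ℝ) • (x - y) = y by module,
    pNorm_smul (by linarith) _ (x - y)] at key
  rw [abs_of_pos (by norm_num : (0 : ℝ) < 1 / 2)] at key
  have hp : p - 1 ≠ 0 := by linarith
  rw [← sub_nonneg]
  refine (mul_nonneg (one_div_nonneg.2 (by linarith : 0 ≤ 2 * (p - 1)))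
    (sub_nonneg.2 key)).trans_eq ?_
  field_simp
  ring
end

section
/- Let F : X → ℝ be convex on a convex set X and satisfy the sharp-minimum condition F(x) − F* ≥ μ₁·dist(x, S) for all x ∈ X, where S = argmin F and dist is measured in a norm ‖·‖. If G : X → ℝ, then any minimizer x̂ of G over X satisfies μ₁·dist(x̂, S) ≤ 2 sup_{x∈X}|G(x) − F(x)|. -/
/-- Under the sharp-minimum condition `F(x) - F* ≥ μ₁ dist(x, S)`, any minimizer `x̂`
of a uniform perturbation `G` of `F` satisfies `μ₁ dist(x̂, S) ≤ 2 sup_{x∈X} |G(x) - F(x)|`. -/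
theorem sharp_minimum_perturbation_stability
    {E : Type*} [NormedAddCommGroup E] [NormedSpace ℝ E]
    (X : Set E) (hX : Convex ℝ X) (F G : E → ℝ) (μ₁ : ℝ) (hμ : 0 < μ₁)
    (hconv : ConvexOn ℝ X F)
    (S : Set E) (hS : S.Nonempty) (hSclosed : IsClosed S) (hSX : S ⊆ X)
    (Fstar : ℝ) (hFS : ∀ s ∈ S, F s = Fstar) (hFlow : ∀ x ∈ X, Fstar ≤ F x)
    (hsharp : ∀ x ∈ X, F x - Fstar ≥ μ₁ * Metric.infDist x S)
    (Δ : ℝ) (hΔ : ∀ x ∈ X, |G x - F x| ≤ Δ)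
    (xhat : E) (hxhat : xhat ∈ X) (hGmin : ∀ x ∈ X, G xhat ≤ G x) :
    μ₁ * Metric.infDist xhat S ≤ 2 * Δ := by
  obtain ⟨s, hs⟩ := hS
  have h1 := hΔ s (hSX hs)
  have h2 := hΔ xhat hxhat
  have h3 := hGmin s (hSX hs)
  have h4 := hsharp xhat hxhat
  have h5 := hFS s hs
  rw [abs_le] at h1 h2
  linarith [h1.1, h1.2, h2.1, h2.2]
end

section
/- Quadratic growth implies a lower bound on distance from sublevel sets to the boundary of optimality for the empirical problem: if both F and F̂ satisfy the μ-quadratic-growth condition in a norm ‖·‖ with solution sets S and Ŝ respectively, and sup_{x∈X}|F̂(x) − F(x)| ≤ Δ, then for every x* ∈ S, dist(x*, Ŝ) ≤ 2√(Δ/μ). -/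
/-- If `F` and `F̂` both satisfy the `μ`-quadratic-growth condition (with solution sets
`S` and `Ŝ`) and `sup_{x∈X} |F̂(x) - F(x)| ≤ Δ`, then every `x* ∈ S` satisfies
`dist(x*, Ŝ) ≤ 2 √(Δ/μ)`. -/
theorem quadratic_growth_solution_set_stability
    {E : Type*} [NormedAddCommGroup E] [NormedSpace ℝ E]
    (X : Set E) (F Fhat : E → ℝ) (μ Δ : ℝ) (hμ : 0 < μ) (hΔ : 0 ≤ Δ)
    (S Shat : Set E) (hS : S.Nonempty) (hShat : Shat.Nonempty)
    (hSclosed : IsClosed S) (hShatclosed : IsClosed Shat)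
    (hSX : S ⊆ X) (hShatX : Shat ⊆ X)
    (Fmin Fhatmin : ℝ)
    (hFS : ∀ s ∈ S, F s = Fmin) (hFlow : ∀ x ∈ X, Fmin ≤ F x)
    (hFhatS : ∀ s ∈ Shat, Fhat s = Fhatmin) (hFhatlow : ∀ x ∈ X, Fhatmin ≤ Fhat x)
    (hQG : ∀ x ∈ X, F x - Fmin ≥ μ / 2 * Metric.infDist x S ^ 2)
    (hQGhat : ∀ x ∈ X, Fhat x - Fhatmin ≥ μ / 2 * Metric.infDist x Shat ^ 2)
    (hunif : ∀ x ∈ X, |Fhat x - F x| ≤ Δ) :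
    ∀ xs ∈ S, Metric.infDist xs Shat ≤ 2 * Real.sqrt (Δ / μ) := by
  intro xs hxs
  obtain ⟨shat, hshat⟩ := hShat
  have hxsX : xs ∈ X := hSX hxs
  have hsX : shat ∈ X := hShatX hshat
  -- Fhat xs - Fhatmin ≤ 2Δ
  have h1 : Fhat xs ≤ F xs + Δ := by
    have := abs_le.mp (hunif xs hxsX); linarith
  have h2 : Fhatmin ≥ F shat - Δ := by
    have := abs_le.mp (hunif shat hsX)
    have := hFhatS shat hshat; linarith
  have h3 : F xs = Fmin := hFS xs hxs
  have h4 : Fmin ≤ F shat := hFlow shat hsX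
  have hbound : Fhat xs - Fhatmin ≤ 2 * Δ := by linarith
  have hq := hQGhat xs hxsX
  have hd2 : Metric.infDist xs Shat ^ 2 ≤ 4 * (Δ / μ) := by
    rw [ge_iff_le] at hq
    have : μ / 2 * Metric.infDist xs Shat ^ 2 ≤ 2 * Δ := le_trans hq hbound
    rw [show (4:ℝ) * (Δ / μ) = 4 * Δ / μ by ring, le_div_iff₀ hμ]
    nlinarith
  have hdnn : 0 ≤ Metric.infDist xs Shat := Metric.infDist_nonneg
  have key : (2 * Real.sqrt (Δ / μ)) ^ 2 = 4 * (Δ / μ) := by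
    rw [mul_pow, Real.sq_sqrt (by positivity)]; ring
  nlinarith [Real.sqrt_nonneg (Δ / μ)]
end
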